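/- Let (E, 𝓔) be a measurable space, m a σ-finite measure on E, and P a Markov kernel on E. Suppose E is partitioned into pairwise disjoint measurable sets (E_n)_{n∈ℕ}, T, and N with: (i) P(x, E_n) = 1 for every x ∈ E_n and every n; (ii) P(x, ·) = δ_x for every x ∈ T; (iii) m(N) = 0; (iv) for every n and all bounded measurable f, g vanishing outside E_n, ∫ (Pf)·g dm = ∫ f·(Pg) dm. Then P is m-symmetric: ∫ (Pf)·g dm = ∫ f·(Pg) dm for all nonnegative measurable f, g on E. -/

import Mathlib

open MeasureTheory ProbabilityTheory
open scoped ENNReal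

private lemma isup_min_nat (a : ℝ≥0∞) : ⨆ k : ℕ, min a (k : ℝ≥0∞) = a := by
  refine le_antisymm (iSup_le fun k => min_le_left _ _) ?_
  rcases eq_or_ne a ⊤ with ha | ha
  · subst ha
    calc (⊤ : ℝ≥0∞) = ⨆ k : ℕ, (k : ℝ≥0∞) := ENNReal.iSup_natCast.symm
    _ ≤ ⨆ k : ℕ, min ⊤ (k : ℝ≥0∞) := by simp
  · obtain ⟨k, hk⟩ := ENNReal.exists_nat_gt ha
    calc a = min a (k : ℝ≥0∞) := (min_eq_left hk.le).symm
    _ ≤ ⨆ k : ℕ, min a (k : ℝ≥0∞) := le_iSup (fun k : ℕ => min a (k : ℝ≥0∞)) k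

/-- The bounded case of the gluing argument. -/
private lemma stmt_10_bounded (E : Type) [MeasurableSpace E] (m : Measure E)
    (P : Kernel E E) [IsMarkovKernel P]
    (En : ℕ → Set E) (T N : Set E)
    (hEnMeas : ∀ n, MeasurableSet (En n)) (hTMeas : MeasurableSet T)
    (hdisjEn : Pairwise (Function.onFun Disjoint En))
    (hdisjT : ∀ n, Disjoint (En n) T)
    (hcover : (⋃ n, En n) ∪ T ∪ N = Set.univ)
    (hinv : ∀ n, ∀ x ∈ En n, P x (En n) = 1)
    (htrap : ∀ x ∈ T, P x = Measure.dirac x)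
    (hnull : m N = 0)
    (hsym : ∀ n, ∀ f g : E → ℝ≥0∞, Measurable f → Measurable g →
      (∃ C : ℝ≥0∞, C ≠ ⊤ ∧ ∀ x, f x ≤ C) → (∃ C : ℝ≥0∞, C ≠ ⊤ ∧ ∀ x, g x ≤ C) →
      (∀ x ∉ En n, f x = 0) → (∀ x ∉ En n, g x = 0) →
      ∫⁻ x, (∫⁻ y, f y ∂(P x)) * g x ∂m = ∫⁻ x, f x * ∫⁻ y, g y ∂(P x) ∂m)
    (f g : E → ℝ≥0∞) (hf : Measurable f) (hg : Measurable g)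
    (hfb : ∃ C : ℝ≥0∞, C ≠ ⊤ ∧ ∀ x, f x ≤ C)
    (hgb : ∃ C : ℝ≥0∞, C ≠ ⊤ ∧ ∀ x, g x ≤ C) :
    ∫⁻ x, (∫⁻ y, f y ∂(P x)) * g x ∂m = ∫⁻ x, f x * ∫⁻ y, g y ∂(P x) ∂m := by
  set A : Set E := ⋃ n, En n with hA
  have hAmeas : MeasurableSet A := MeasurableSet.iUnion hEnMeas
  have hATmeas : MeasurableSet (A ∪ T) := hAmeas.union hTMeas
  have hcompl : m ((A ∪ T)ᶜ) = 0 := by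
    refine measure_mono_null (fun x hx => ?_) hnull
    have hxu : x ∈ (⋃ n, En n) ∪ T ∪ N := hcover.symm ▸ Set.mem_univ x
    rw [← hA] at hxu
    simp only [Set.mem_compl_iff, Set.mem_union] at hx hxu
    tauto
  -- split integrals over A ∪ T and its complement
  have split : ∀ h : E → ℝ≥0∞, Measurable h →
      ∫⁻ x, h x ∂m = (∑' n, ∫⁻ x in En n, h x ∂m) + ∫⁻ x in T, h x ∂m := by
    intro h hh
    rw [← lintegral_add_compl h hATmeas, setLIntegral_measure_zero _ _ hcompl, add_zero,
      lintegral_union hTMeas (Set.disjoint_iUnion_left.2 hdisjT),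
      lintegral_iUnion hEnMeas hdisjEn]
  have hPf : Measurable fun x => ∫⁻ y, f y ∂(P x) := hf.lintegral_kernel
  have hPg : Measurable fun x => ∫⁻ y, g y ∂(P x) := hg.lintegral_kernel
  rw [split (fun x => (∫⁻ y, f y ∂(P x)) * g x) (hPf.mul hg),
    split (fun x => f x * ∫⁻ y, g y ∂(P x)) (hf.mul hPg)]
  congr 1
  · -- sum over the pieces
    refine tsum_congr fun n => ?_
    -- indicator versions
    set f' : E → ℝ≥0∞ := (En n).indicator f with hf'
    set g' : E → ℝ≥0∞ := (En n).indicator g with hg'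
    have hf'meas : Measurable f' := hf.indicator (hEnMeas n)
    have hg'meas : Measurable g' := hg.indicator (hEnMeas n)
    have hf'b : ∃ C : ℝ≥0∞, C ≠ ⊤ ∧ ∀ x, f' x ≤ C := by
      obtain ⟨C, hC, hCf⟩ := hfb
      exact ⟨C, hC, fun x => (Set.indicator_le_self _ _ x).trans (hCf x)⟩
    have hg'b : ∃ C : ℝ≥0∞, C ≠ ⊤ ∧ ∀ x, g' x ≤ C := by
      obtain ⟨C, hC, hCg⟩ := hgb
      exact ⟨C, hC, fun x => (Set.indicator_le_self _ _ x).trans (hCg x)⟩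
    have hf'0 : ∀ x ∉ En n, f' x = 0 := fun x hx => Set.indicator_of_notMem hx f
    have hg'0 : ∀ x ∉ En n, g' x = 0 := fun x hx => Set.indicator_of_notMem hx g
    have key := hsym n f' g' hf'meas hg'meas hf'b hg'b hf'0 hg'0
    -- for x in En n, P x is concentrated on En n
    have hPconc : ∀ x ∈ En n, ∀ h : E → ℝ≥0∞, Measurable h →
        ∫⁻ y, (En n).indicator h y ∂(P x) = ∫⁻ y, h y ∂(P x) := by
      intro x hx h hh
      have h1 : P x (En n)ᶜ = 0 := by
        have : IsProbabilityMeasure (P x) := IsMarkovKernel.isProbabilityMeasure x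
        rw [measure_compl (hEnMeas n) (measure_ne_top _ _), hinv n x hx, measure_univ,
          tsub_self]
      rw [lintegral_indicator (hEnMeas n) _,
        ← lintegral_add_compl h (hEnMeas n) (μ := P x),
        setLIntegral_measure_zero _ _ h1, add_zero]
    -- rewrite lhs of key
    have lhs_eq : ∫⁻ x, (∫⁻ y, f' y ∂(P x)) * g' x ∂m
        = ∫⁻ x in En n, (∫⁻ y, f y ∂(P x)) * g x ∂m := by
      have : ∀ x, (∫⁻ y, f' y ∂(P x)) * g' x
          = (En n).indicator (fun x => (∫⁻ y, f' y ∂(P x)) * g x) x := by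
        intro x
        by_cases hx : x ∈ En n
        · rw [Set.indicator_of_mem hx, hg', Set.indicator_of_mem hx]
        · rw [Set.indicator_of_notMem hx, hg', Set.indicator_of_notMem hx, mul_zero]
      rw [lintegral_congr this, lintegral_indicator (hEnMeas n) _]
      refine setLIntegral_congr_fun (hEnMeas n) (fun x hx => ?_)
      rw [hf', hPconc x hx f hf]
    have rhs_eq : ∫⁻ x, f' x * ∫⁻ y, g' y ∂(P x) ∂m
        = ∫⁻ x in En n, f x * ∫⁻ y, g y ∂(P x) ∂m := by
      have : ∀ x, f' x * ∫⁻ y, g' y ∂(P x)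
          = (En n).indicator (fun x => f x * ∫⁻ y, g' y ∂(P x)) x := by
        intro x
        by_cases hx : x ∈ En n
        · rw [Set.indicator_of_mem hx, hf', Set.indicator_of_mem hx]
        · rw [Set.indicator_of_notMem hx, hf', Set.indicator_of_notMem hx, zero_mul]
      rw [lintegral_congr this, lintegral_indicator (hEnMeas n) _]
      refine setLIntegral_congr_fun (hEnMeas n) (fun x hx => ?_)
      rw [hg', hPconc x hx g hg]
    rw [← lhs_eq, key, rhs_eq]
  · -- traps
    refine setLIntegral_congr_fun hTMeas (fun x hx => ?_)
    rw [htrap x hx, lintegral_dirac' x hf, lintegral_dirac' x hg]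

/-- Gluing argument: a Markov kernel that is symmetric on each invariant piece,
acts as identity on traps, and whose remainder is null, is globally symmetric. -/
theorem stmt_10 (E : Type) [MeasurableSpace E] (m : Measure E) [SigmaFinite m]
    (P : Kernel E E) [IsMarkovKernel P]
    (En : ℕ → Set E) (T N : Set E)
    (hEnMeas : ∀ n, MeasurableSet (En n)) (hTMeas : MeasurableSet T)
    (hNMeas : MeasurableSet N)
    (hdisjEn : Pairwise (Function.onFun Disjoint En))
    (hdisjT : ∀ n, Disjoint (En n) T) (hdisjN : ∀ n, Disjoint (En n) N)
    (hdisjTN : Disjoint T N)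
    (hcover : (⋃ n, En n) ∪ T ∪ N = Set.univ)
    (hinv : ∀ n, ∀ x ∈ En n, P x (En n) = 1)
    (htrap : ∀ x ∈ T, P x = Measure.dirac x)
    (hnull : m N = 0)
    (hsym : ∀ n, ∀ f g : E → ℝ≥0∞, Measurable f → Measurable g →
      (∃ C : ℝ≥0∞, C ≠ ⊤ ∧ ∀ x, f x ≤ C) → (∃ C : ℝ≥0∞, C ≠ ⊤ ∧ ∀ x, g x ≤ C) →
      (∀ x ∉ En n, f x = 0) → (∀ x ∉ En n, g x = 0) →
      ∫⁻ x, (∫⁻ y, f y ∂(P x)) * g x ∂m = ∫⁻ x, f x * ∫⁻ y, g y ∂(P x) ∂m) :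
    ∀ f g : E → ℝ≥0∞, Measurable f → Measurable g →
      ∫⁻ x, (∫⁻ y, f y ∂(P x)) * g x ∂m = ∫⁻ x, f x * ∫⁻ y, g y ∂(P x) ∂m := by
  -- first extend to general f with bounded g, then to general g
  have bounded := stmt_10_bounded E m P En T N hEnMeas hTMeas hdisjEn hdisjT hcover hinv
    htrap hnull hsym
  have step1 : ∀ f g : E → ℝ≥0∞, Measurable f → Measurable g →
      (∃ C : ℝ≥0∞, C ≠ ⊤ ∧ ∀ x, g x ≤ C) →
      ∫⁻ x, (∫⁻ y, f y ∂(P x)) * g x ∂m = ∫⁻ x, f x * ∫⁻ y, g y ∂(P x) ∂m := by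
    intro f g hf hg hgb
    set F : ℕ → E → ℝ≥0∞ := fun k x => min (f x) k with hF
    have hFmeas : ∀ k, Measurable (F k) := fun k => hf.min measurable_const
    have hFmono : Monotone F := fun i j hij x => min_le_min le_rfl (by exact_mod_cast Nat.cast_le.2 hij)
    have hFsup : ∀ x, ⨆ k, F k x = f x := fun x => isup_min_nat (f x)
    have hPg : Measurable fun x => ∫⁻ y, g y ∂(P x) := hg.lintegral_kernel
    have lhs : ∫⁻ x, (∫⁻ y, f y ∂(P x)) * g x ∂m
        = ⨆ k, ∫⁻ x, (∫⁻ y, F k y ∂(P x)) * g x ∂m := by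
      have h1 : ∀ x, (∫⁻ y, f y ∂(P x)) * g x = ⨆ k, (∫⁻ y, F k y ∂(P x)) * g x := by
        intro x
        rw [← ENNReal.iSup_mul]
        congr 1
        rw [← lintegral_iSup (fun k => hFmeas k) (fun i j hij y => hFmono hij y)]
        exact lintegral_congr fun y => (hFsup y).symm ▸ rfl
      rw [lintegral_congr h1]
      exact lintegral_iSup (fun k => ((hFmeas k).lintegral_kernel).mul hg)
        (fun i j hij x => mul_le_mul_left (lintegral_mono fun y => hFmono hij y) _)
    have rhs : ∫⁻ x, f x * ∫⁻ y, g y ∂(P x) ∂m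
        = ⨆ k, ∫⁻ x, F k x * ∫⁻ y, g y ∂(P x) ∂m := by
      have h1 : ∀ x, f x * ∫⁻ y, g y ∂(P x) = ⨆ k, F k x * ∫⁻ y, g y ∂(P x) := by
        intro x
        rw [← ENNReal.iSup_mul, hFsup x]
      rw [lintegral_congr h1]
      exact lintegral_iSup (fun k => (hFmeas k).mul hPg)
        (fun i j hij x => mul_le_mul_left (hFmono hij x) _)
    rw [lhs, rhs]
    refine iSup_congr fun k => ?_
    exact bounded (F k) g (hFmeas k) hg ⟨k, ENNReal.natCast_ne_top k, fun x => min_le_right _ _⟩ hgb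
  intro f g hf hg
  set G : ℕ → E → ℝ≥0∞ := fun k x => min (g x) k with hG
  have hGmeas : ∀ k, Measurable (G k) := fun k => hg.min measurable_const
  have hGmono : Monotone G := fun i j hij x => min_le_min le_rfl (by exact_mod_cast Nat.cast_le.2 hij)
  have hGsup : ∀ x, ⨆ k, G k x = g x := fun x => isup_min_nat (g x)
  have hPf : Measurable fun x => ∫⁻ y, f y ∂(P x) := hf.lintegral_kernel
  have lhs : ∫⁻ x, (∫⁻ y, f y ∂(P x)) * g x ∂m
      = ⨆ k, ∫⁻ x, (∫⁻ y, f y ∂(P x)) * G k x ∂m := by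
    have h1 : ∀ x, (∫⁻ y, f y ∂(P x)) * g x = ⨆ k, (∫⁻ y, f y ∂(P x)) * G k x := by
      intro x
      rw [← ENNReal.mul_iSup, hGsup x]
    rw [lintegral_congr h1]
    exact lintegral_iSup (fun k => hPf.mul (hGmeas k))
      (fun i j hij x => mul_le_mul_right (hGmono hij x) _)
  have rhs : ∫⁻ x, f x * ∫⁻ y, g y ∂(P x) ∂m
      = ⨆ k, ∫⁻ x, f x * ∫⁻ y, G k y ∂(P x) ∂m := by
    have h1 : ∀ x, f x * ∫⁻ y, g y ∂(P x) = ⨆ k, f x * ∫⁻ y, G k y ∂(P x) := by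
      intro x
      rw [← ENNReal.mul_iSup]
      congr 1
      rw [← lintegral_iSup (fun k => hGmeas k) (fun i j hij y => hGmono hij y)]
      exact lintegral_congr fun y => (hGsup y).symm ▸ rfl
    rw [lintegral_congr h1]
    exact lintegral_iSup (fun k => hf.mul ((hGmeas k).lintegral_kernel))
      (fun i j hij x => mul_le_mul_right (lintegral_mono fun y => hGmono hij y) _)
  rw [lhs, rhs]
  refine iSup_congr fun k => ?_
  exact step1 f (G k) hf (hGmeas k) ⟨k, ENNReal.natCast_ne_top k, fun x => min_le_right _ _⟩
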